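/- For u > 0 and integer n ≥ 0, define g_n(u) = ∫₀^u (u−v)^n · e^{−v}/√(πv) dv. Then g₀(u) = erf(√u), g₁(u) = (u − 1/2)·erf(√u) + √(u/π)·e^{−u}, and for every n ≥ 2 the three-term linear recursion g_n(u) = (u − n + 1/2)·g_{n−1}(u) + (n−1)·u·g_{n−2}(u) holds. -/

import Mathlib

open MeasureTheory

/-- The Gauss error function `erf(x) = (2/√π)·∫₀^x e^{−s²} ds`. -/
noncomputable def erf (x : ℝ) : ℝ :=
  (2 / Real.sqrt Real.pi) * ∫ s in (0 : ℝ)..x, Real.exp (-s ^ 2)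

/-- `g_n(u) = ∫₀^u (u−v)^n e^{−v}/√(πv) dv`. -/
noncomputable def g (n : ℕ) (u : ℝ) : ℝ :=
  ∫ v in (0 : ℝ)..u, (u - v) ^ n * (Real.exp (-v) / Real.sqrt (Real.pi * v))

/-!
Write `w v = e^{-v} / √(π v)`. Since `erf √v` is an antiderivative of `w`, the fundamental
theorem of calculus gives `g₀`. The function `2 e^{-v} √(v/π) = 2 v w v` has derivative
`(1 - 2 v) w v`, so differentiating `(u - v)^m · 2 v w v` and writing `v = u - (u - v)` yields
an exact derivative whose integral over `[0, u]` is the relation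
`-2 m u g_{m-1} + (2 m + 1 - 2 u) g_m + 2 g_{m+1} = 2 · 0^m e^{-u} √(u/π)`.
Taking `m = 0` gives `g₁`, and `m = n - 1` the recursion.
-/

open Real Set intervalIntegral

lemma intervalIntegrable_mul_exp_neg_div_sqrt {f : ℝ → ℝ} {u : ℝ} (hu : 0 ≤ u)
    (hf : ContinuousOn f (uIcc 0 u)) :
    IntervalIntegrable (fun v => f v * (exp (-v) / √(π * v))) volume 0 u := by
  have hrpow : IntervalIntegrable (fun v : ℝ => v ^ (-(1 / 2) : ℝ)) volume 0 u :=
    intervalIntegrable_rpow' (by norm_num)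
  have hcont : ContinuousOn (fun v => f v * (exp (-v) / √π)) (uIcc 0 u) :=
    hf.mul (by fun_prop)
  refine (hrpow.mul_continuousOn hcont).congr fun v hv => ?_
  rw [uIoc_of_le hu] at hv
  rw [rpow_neg hv.1.le, ← sqrt_eq_rpow, sqrt_mul pi_pos.le]
  have : √v ≠ 0 := (sqrt_pos.2 hv.1).ne'
  field_simp

lemma hasDerivAt_erf (x : ℝ) : HasDerivAt erf (2 / √π * exp (-x ^ 2)) x :=
  ((continuous_exp.comp (continuous_pow 2).neg).integral_hasStrictDerivAt 0 x).hasDerivAt.const_mul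
    _

lemma hasDerivAt_erf_sqrt {v : ℝ} (hv : 0 < v) :
    HasDerivAt (fun v => erf √v) (exp (-v) / √(π * v)) v := by
  refine ((hasDerivAt_erf √v).comp v (hasDerivAt_sqrt hv.ne')).congr_deriv ?_
  rw [sq_sqrt hv.le, sqrt_mul pi_pos.le]
  have : √v ≠ 0 := (sqrt_pos.2 hv).ne'
  field_simp

lemma g_zero_eq_erf_sqrt {u : ℝ} (hu : 0 ≤ u) : g 0 u = erf √u := by
  have hcont : ContinuousOn (fun v => erf √v) (Icc 0 u) :=
    (continuous_iff_continuousAt.2 fun x => (hasDerivAt_erf x).continuousAt).comp_continuousOn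
      continuous_sqrt.continuousOn
  have hint := intervalIntegrable_mul_exp_neg_div_sqrt hu (continuousOn_const (c := (1 : ℝ)))
  simp only [one_mul] at hint
  simp only [g, pow_zero, one_mul]
  rw [integral_eq_sub_of_hasDeriv_right_of_le hu hcont
    (fun v hv => (hasDerivAt_erf_sqrt hv.1).hasDerivWithinAt) hint]
  simp [erf]

lemma hasDerivAt_two_mul_exp_neg_mul_sqrt_div_pi {v : ℝ} (hv : 0 < v) :
    HasDerivAt (fun v => 2 * exp (-v) * √(v / π)) (exp (-v) / √(π * v) * (1 - 2 * v)) v := by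
  have hexp : HasDerivAt (fun v => exp (-v)) (-exp (-v)) v := by
    simpa using (hasDerivAt_neg v).exp
  have hsqrt := (hasDerivAt_sqrt (div_pos hv pi_pos).ne').comp v ((hasDerivAt_id v).div_const π)
  refine ((hexp.const_mul 2).fun_mul hsqrt).congr_deriv ?_
  have : √v ≠ 0 := (sqrt_pos.2 hv).ne'
  have : √π ≠ 0 := (sqrt_pos.2 pi_pos).ne'
  simp only [Function.comp_apply, id, sqrt_div hv.le, sqrt_mul pi_pos.le]
  field_simp
  rw [sq_sqrt hv.le, sq_sqrt pi_pos.le]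
  ring

lemma hasDerivAt_pow_mul_two_mul_exp_neg_mul_sqrt_div_pi (m : ℕ) {u v : ℝ} (hv : 0 < v) :
    HasDerivAt (fun v => (u - v) ^ m * (2 * exp (-v) * √(v / π)))
      (-2 * m * u * ((u - v) ^ (m - 1) * (exp (-v) / √(π * v)))
        + ((2 * m + 1 - 2 * u) * ((u - v) ^ m * (exp (-v) / √(π * v)))
        + 2 * ((u - v) ^ (m + 1) * (exp (-v) / √(π * v))))) v := by
  have hpow : HasDerivAt (fun v => (u - v) ^ m) (m * (u - v) ^ (m - 1) * -1) v := by
    simpa using ((hasDerivAt_id v).const_sub u).fun_pow m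
  refine (hpow.mul (hasDerivAt_two_mul_exp_neg_mul_sqrt_div_pi hv)).congr_deriv ?_
  have hsqrt : 2 * exp (-v) * √(v / π) = 2 * v * (exp (-v) / √(π * v)) := by
    rw [sqrt_div hv.le, sqrt_mul pi_pos.le]
    have : √v ≠ 0 := (sqrt_pos.2 hv).ne'
    have : √π ≠ 0 := (sqrt_pos.2 pi_pos).ne'
    field_simp
    rw [sq_sqrt hv.le]
  have hshift : (m : ℝ) * (u - v) ^ (m - 1) * (u - v) = m * (u - v) ^ m := by
    rcases m with _ | m
    · simp
    · rw [mul_assoc, ← pow_succ, Nat.add_sub_cancel]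
  rw [hsqrt]
  linear_combination 2 * (exp (-v) / √(π * v)) * hshift

-- At `m = 0` the junk value `g (0 - 1) = g 0` is multiplied by `m = 0`.
lemma g_three_term (m : ℕ) {u : ℝ} (hu : 0 ≤ u) :
    -2 * m * u * g (m - 1) u + ((2 * m + 1 - 2 * u) * g m u + 2 * g (m + 1) u)
      = (0 : ℝ) ^ m * (2 * exp (-u) * √(u / π)) := by
  have hint (k : ℕ) := intervalIntegrable_mul_exp_neg_div_sqrt hu
    (f := fun v => (u - v) ^ k) (by fun_prop)
  have hcont : ContinuousOn (fun v => (u - v) ^ m * (2 * exp (-v) * √(v / π))) (Icc 0 u) := by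
    fun_prop
  have hFTC := integral_eq_sub_of_hasDeriv_right_of_le hu hcont
    (fun v hv => (hasDerivAt_pow_mul_two_mul_exp_neg_mul_sqrt_div_pi m hv.1).hasDerivWithinAt)
    (((hint _).const_mul _).add (((hint _).const_mul _).add ((hint _).const_mul _)))
  rw [integral_add ((hint _).const_mul _) (((hint _).const_mul _).add ((hint _).const_mul _)),
    integral_add ((hint _).const_mul _) ((hint _).const_mul _), intervalIntegral.integral_const_mul,
    intervalIntegral.integral_const_mul, intervalIntegral.integral_const_mul] at hFTC
  simpa [g] using hFTC

/-- Explicit values of `g₀`, `g₁`, and the three-term linear recursion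
`g_n(u) = (u − n + 1/2)·g_{n−1}(u) + (n−1)·u·g_{n−2}(u)` for `n ≥ 2`. -/
theorem statement18 (u : ℝ) (hu : 0 < u) :
    g 0 u = erf (Real.sqrt u) ∧
    g 1 u = (u - 1 / 2) * erf (Real.sqrt u) + Real.sqrt (u / Real.pi) * Real.exp (-u) ∧
    ∀ n : ℕ, 2 ≤ n →
      g n u = (u - n + 1 / 2) * g (n - 1) u + ((n : ℝ) - 1) * u * g (n - 2) u := by
  have hg0 := g_zero_eq_erf_sqrt hu.le
  refine ⟨hg0, ?_, fun n hn => ?_⟩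
  · have h := g_three_term 0 hu.le
    norm_num [hg0] at h
    linarith
  · obtain ⟨m, rfl⟩ := Nat.exists_eq_add_of_le' hn
    have h := g_three_term (m + 1) hu.le
    simp only [Nat.add_sub_cancel] at h ⊢
    norm_num at h
    push_cast at h ⊢
    linarith
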